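/- Let a=(a_1,...,a_n) be a weakly increasing real sequence and let e=(e_1,...,e_n) be an arbitrary real sequence. Then e is a restricted growth sequence relative to a in the cap sense if and only if e is a restricted growth sequence relative to a in the general algorithmic sense. -/

import Mathlib

open Polynomial Finset

/-- The cap-index function for the restricted-growth condition (0-indexed version of
`f` with `f(1) = 1`): `capF a e i` is `f(i+1) - 1`, so the cap for `e i` is
`a (capF a e i)`.  The index increments exactly when `e_i` equals its cap. -/
noncomputable def capF (a e : ℕ → ℝ) : ℕ → ℕ
  | 0 => 0
  | i + 1 => if e i = a (capF a e i) then capF a e i + 1 else capF a e i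

/-- `e` is a restricted growth sequence relative to (weakly increasing) `a`
(cap sense): each `e_i` is at most its cap `a_{f(i)}`. -/
def IsRGCap (n : ℕ) (a e : ℕ → ℝ) : Prop :=
  ∀ i, i < n → e i ≤ a (capF a e i)

/-- One step of the algorithmic restricted-growth test: given `a_i` and the current
list `X`, find the first element of `X` that is `≥ a_i`; if none exists delete the
last element of `X`; if it equals `a_i` delete that occurrence; if it exceeds `a_i`,
fail (return `none`). -/
noncomputable def rgsStep (ai : ℝ) (Xl : List ℝ) : Option (List ℝ) :=
  match Xl.findIdx? (fun x => decide (ai ≤ x)) with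
  | none => some Xl.dropLast
  | some j => if Xl.getD j 0 = ai then some (Xl.eraseIdx j) else none

/-- Run the first `i` steps of the algorithm (with caps `a 0, a 1, …`), starting
from the list `Xl`. -/
noncomputable def rgsRun (a : ℕ → ℝ) (Xl : List ℝ) : ℕ → Option (List ℝ)
  | 0 => some Xl
  | i + 1 => (rgsRun a Xl i).bind (rgsStep (a i))

/-- `e` is a restricted growth sequence relative to `a` (general algorithmic sense):
the algorithm, started on the list `(e_1, …, e_n)`, completes all `n` steps without
failure. -/
def IsRGGen (n : ℕ) (a e : ℕ → ℝ) : Prop :=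
  (rgsRun a (List.ofFn fun i : Fin n => e i) n).isSome

/-!
Call `j` a hit when `e j` equals its cap `a (capF a e j)`; the cap index advances exactly at
hits, so the hits with cap index `0, 1, …, capF a e N - 1` are the first hits, one for each
value. As long as every `e k` so far respects its cap, step `m` of the algorithm deletes exactly
the hit with cap index `m`: every entry in front of it is a non-hit `e k < a (capF a e k) ≤ a m`
by monotonicity of `a`. Hence, if `e` satisfies the cap condition, after `capF a e n` steps only
non-hits remain, all below every later `a t`, and the algorithm finishes by dropping last
elements. Conversely, at the first position `i` with `e i > a (capF a e i)`, step `capF a e i`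
finds `e i` as the first entry `≥ a (capF a e i)` and fails.
-/

namespace RestrictedGrowth

lemma rgsStep_split {t x : ℝ} {A B : List ℝ} (hA : ∀ y ∈ A, y < t) (hx : t ≤ x) :
    rgsStep t (A ++ x :: B) = if x = t then some (A ++ B) else none := by
  have hfind : (A ++ x :: B).findIdx? (fun y => decide (t ≤ y)) = some A.length := by
    rw [List.findIdx?_append, List.findIdx?_eq_none_iff.2 fun y hy => by simpa using hA y hy,
      List.findIdx?_cons, if_pos (by simpa using hx)]
    simp
  have hget : (A ++ x :: B).getD A.length 0 = x := by
    rw [List.getD_append_right _ _ _ _ le_rfl]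
    simp
  have herase : (A ++ x :: B).eraseIdx A.length = A ++ B := by
    rw [List.eraseIdx_append_of_length_le le_rfl]
    simp
  simp only [rgsStep, hfind, hget, herase]

lemma rgsStep_of_forall_lt {t : ℝ} {X : List ℝ} (h : ∀ y ∈ X, y < t) :
    rgsStep t X = some X.dropLast := by
  have hfind : X.findIdx? (fun y => decide (t ≤ y)) = none :=
    List.findIdx?_eq_none_iff.2 fun y hy => by simpa using h y hy
  simp only [rgsStep, hfind]

lemma rgsRun_eq_none_of_le {a : ℕ → ℝ} {X : List ℝ} {m n : ℕ} (h : rgsRun a X m = none)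
    (hmn : m ≤ n) : rgsRun a X n = none := by
  induction n, hmn using Nat.le_induction with
  | base => exact h
  | succ n _ ih => rw [rgsRun, ih, Option.bind_none]

lemma rgsRun_isSome_of_forall_lt {a : ℕ → ℝ} {X Y : List ℝ} {m n : ℕ}
    (hY : rgsRun a X m = some Y) (hmn : m ≤ n) (hlt : ∀ y ∈ Y, ∀ t, m ≤ t → t < n → y < a t) :
    (rgsRun a X n).isSome := by
  suffices ∀ k, m ≤ k → k ≤ n → ∃ Z ⊆ Y, rgsRun a X k = some Z by
    obtain ⟨Z, -, hZ⟩ := this n hmn le_rfl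
    simp [hZ]
  intro k hmk
  induction k, hmk using Nat.le_induction with
  | base => exact fun _ => ⟨Y, List.Subset.refl Y, hY⟩
  | succ k hmk ih =>
    intro hkn
    obtain ⟨Z, hZY, hZ⟩ := ih (by omega)
    refine ⟨Z.dropLast, List.Subset.trans (List.dropLast_subset Z) hZY, ?_⟩
    rw [rgsRun, hZ, Option.bind_some,
      rgsStep_of_forall_lt fun y hy => hlt y (hZY hy) k hmk (by omega)]

variable (a e : ℕ → ℝ)

def IsHit (j : ℕ) : Prop := e j = a (capF a e j)

variable {a e}

lemma capF_succ_of_isHit {j : ℕ} (h : IsHit a e j) : capF a e (j + 1) = capF a e j + 1 := by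
  simp [capF, show e j = a (capF a e j) from h]

lemma capF_succ_of_not_isHit {j : ℕ} (h : ¬IsHit a e j) : capF a e (j + 1) = capF a e j := by
  simp [capF, show ¬e j = a (capF a e j) from h]

variable (a e) in
lemma capF_monotone : Monotone (capF a e) := by
  refine monotone_nat_of_le_succ fun i => ?_
  by_cases h : IsHit a e i
  · simp [capF_succ_of_isHit h]
  · simp [capF_succ_of_not_isHit h]

variable (a e) in
lemma capF_le_self (i : ℕ) : capF a e i ≤ i := by
  induction i with
  | zero => simp [capF]
  | succ i ih =>
    by_cases h : IsHit a e i
    · simp [capF_succ_of_isHit h, ih]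
    · simp [capF_succ_of_not_isHit h]; omega

lemma capF_lt_of_isHit {j k : ℕ} (hjk : j < k) (hj : IsHit a e j) :
    capF a e j < capF a e k := by
  have := capF_monotone a e (show j + 1 ≤ k from hjk)
  rw [capF_succ_of_isHit hj] at this
  omega

lemma eq_of_isHit_of_capF_eq {j k : ℕ} (hj : IsHit a e j) (hk : IsHit a e k)
    (h : capF a e j = capF a e k) : j = k := by
  by_contra hne
  rcases Nat.lt_or_gt_of_ne hne with hjk | hkj
  · exact (capF_lt_of_isHit hjk hj).ne h
  · exact (capF_lt_of_isHit hkj hk).ne' h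

lemma exists_isHit_capF_eq {k t : ℕ} (ht : t < capF a e k) :
    ∃ j < k, IsHit a e j ∧ capF a e j = t := by
  induction k with
  | zero => simp [capF] at ht
  | succ k ih =>
    by_cases hk : IsHit a e k
    · rw [capF_succ_of_isHit hk] at ht
      rcases (Nat.lt_succ_iff_lt_or_eq.1 ht) with ht | rfl
      · obtain ⟨j, hj, hit, rfl⟩ := ih ht
        exact ⟨j, by omega, hit, rfl⟩
      · exact ⟨k, by omega, hk, rfl⟩
    · rw [capF_succ_of_not_isHit hk] at ht
      obtain ⟨j, hj, hit, rfl⟩ := ih ht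
      exact ⟨j, by omega, hit, rfl⟩

lemma isRGCap_of_le {N N' : ℕ} (h : N ≤ N') (hcap : IsRGCap N' a e) : IsRGCap N a e :=
  fun i hi => hcap i (by omega)

lemma isRGCap_succ {N : ℕ} (hcap : IsRGCap N a e) (hN : e N ≤ a (capF a e N)) :
    IsRGCap (N + 1) a e := by
  intro i hi
  rcases Nat.lt_succ_iff_lt_or_eq.1 hi with hi | rfl
  · exact hcap i hi
  · exact hN

lemma lt_cap_of_not_isHit {N k : ℕ} (hcap : IsRGCap N a e) (hk : k < N) (hhit : ¬IsHit a e k) :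
    e k < a (capF a e k) :=
  lt_of_le_of_ne (hcap k hk) hhit

variable (a e) in
open Classical in
/-- Invariant of the algorithm: after `m` steps the list holds, in order, the `e k` with `k`
not among the first `m` hits (those with cap index `< m`). -/
noncomputable def pending (m k : ℕ) : Bool := decide ¬(IsHit a e k ∧ capF a e k < m)

lemma pending_iff {m k : ℕ} : pending a e m k = true ↔ ¬(IsHit a e k ∧ capF a e k < m) := by
  simp only [pending, decide_eq_true_iff]

lemma pending_self (j : ℕ) : pending a e (capF a e j) j = true :=
  pending_iff.2 fun h => lt_irrefl _ h.2

lemma not_isHit_of_pending {j k : ℕ} (hkj : k < j) (hk : pending a e (capF a e j) k = true) :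
    ¬IsHit a e k :=
  fun hit => pending_iff.1 hk ⟨hit, capF_lt_of_isHit hkj hit⟩

lemma pending_succ_of_ne {j k : ℕ} (hj : IsHit a e j) (hkj : k ≠ j) :
    pending a e (capF a e j + 1) k = pending a e (capF a e j) k := by
  rw [Bool.eq_iff_iff, pending_iff, pending_iff, Nat.lt_succ_iff_lt_or_eq]
  have : ¬(IsHit a e k ∧ capF a e k = capF a e j) :=
    fun h => hkj (eq_of_isHit_of_capF_eq h.1 hj h.2)
  tauto

lemma pending_succ_self {j : ℕ} (hj : IsHit a e j) : pending a e (capF a e j + 1) j = false := by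
  rw [Bool.eq_false_iff, ne_eq, pending_iff, not_not]
  exact ⟨hj, Nat.lt_succ_self _⟩

lemma range_eq_append_cons {j n : ℕ} (hj : j < n) :
    List.range n = List.range j ++ j :: List.range' (j + 1) (n - (j + 1)) := by
  have h := (List.range'_append_1 (s := 0) (m := j) (n := n - j)).symm
  rw [Nat.zero_add, Nat.add_sub_cancel' hj.le, show n - j = n - (j + 1) + 1 by omega,
    List.range'_succ] at h
  simpa only [List.range_eq_range'] using h

variable {n : ℕ} (ha : MonotoneOn a (Set.Iio n))
include ha

lemma lt_cap_of_mem_pending_prefix {j : ℕ} (hcap : IsRGCap j a e) (hj : j < n) :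
    ∀ y ∈ ((List.range j).filter (pending a e (capF a e j))).map e, y < a (capF a e j) := by
  simp only [List.mem_map, List.mem_filter, List.mem_range]
  rintro _ ⟨k, ⟨hkj, hk⟩, rfl⟩
  have hcapk : capF a e k ≤ capF a e j := capF_monotone a e hkj.le
  calc e k < a (capF a e k) := lt_cap_of_not_isHit hcap hkj (not_isHit_of_pending hkj hk)
    _ ≤ a (capF a e j) :=
      have hjn : capF a e j < n := (capF_le_self a e j).trans_lt hj
      ha (Set.mem_Iio.2 (hcapk.trans_lt hjn)) (Set.mem_Iio.2 hjn) hcapk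

lemma rgsStep_pending_of_isHit {j : ℕ} (hcap : IsRGCap j a e) (hj : j < n) (hit : IsHit a e j) :
    rgsStep (a (capF a e j)) (((List.range n).filter (pending a e (capF a e j))).map e) =
      some (((List.range n).filter (pending a e (capF a e j + 1))).map e) := by
  rw [range_eq_append_cons hj, List.filter_append, List.filter_append,
    List.filter_cons_of_pos (pending_self j),
    List.filter_cons_of_neg (by simp [pending_succ_self hit]), List.map_append, List.map_cons,
    rgsStep_split (lt_cap_of_mem_pending_prefix ha hcap hj) hit.symm.le,
    if_pos (show e j = a (capF a e j) from hit), ← List.map_append]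
  congr 3 <;> refine List.filter_congr fun k hk => (pending_succ_of_ne hit ?_).symm
  · exact (List.mem_range.1 hk).ne
  · exact (Nat.lt_of_succ_le (List.mem_range'_1.1 hk).1).ne'

lemma rgsStep_pending_eq_none {i : ℕ} (hcap : IsRGCap i a e) (hi : i < n)
    (hviol : a (capF a e i) < e i) :
    rgsStep (a (capF a e i)) (((List.range n).filter (pending a e (capF a e i))).map e) = none := by
  rw [range_eq_append_cons hi, List.filter_append, List.filter_cons_of_pos (pending_self i),
    List.map_append, List.map_cons,
    rgsStep_split (lt_cap_of_mem_pending_prefix ha hcap hi) hviol.le, if_neg hviol.ne']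

lemma rgsRun_eq_pending {N : ℕ} (hcap : IsRGCap N a e) (hN : N ≤ n) {m : ℕ}
    (hm : m ≤ capF a e N) :
    rgsRun a (List.ofFn fun i : Fin n => e i) m =
      some (((List.range n).filter (pending a e m)).map e) := by
  induction m with
  | zero =>
    rw [List.filter_eq_self.2 fun k _ => pending_iff.2 (by omega)]
    exact congrArg some (List.ext_getElem (by simp) (by simp))
  | succ m ih =>
    obtain ⟨j, hjN, hit, rfl⟩ := exists_isHit_capF_eq (Nat.lt_of_succ_le hm)
    rw [rgsRun, ih (by omega), Option.bind_some,
      rgsStep_pending_of_isHit ha (isRGCap_of_le hjN.le hcap) (by omega) hit]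

lemma lt_of_mem_pending_capF (hcap : IsRGCap n a e) :
    ∀ y ∈ ((List.range n).filter (pending a e (capF a e n))).map e,
      ∀ t, capF a e n ≤ t → t < n → y < a t := by
  simp only [List.mem_map, List.mem_filter, List.mem_range]
  rintro _ ⟨k, ⟨hkn, hk⟩, rfl⟩ t hnt htn
  calc e k < a (capF a e k) := lt_cap_of_not_isHit hcap hkn (not_isHit_of_pending hkn hk)
    _ ≤ a t := ha (Set.mem_Iio.2 ((capF_le_self a e k).trans_lt hkn))
      (Set.mem_Iio.2 htn) ((capF_monotone a e hkn.le).trans hnt)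

lemma rgsRun_eq_none_of_cap_lt {N : ℕ} (hcap : IsRGCap N a e) (hN : N < n)
    (hviol : a (capF a e N) < e N) :
    rgsRun a (List.ofFn fun i : Fin n => e i) n = none := by
  refine rgsRun_eq_none_of_le ?_ (Nat.succ_le_of_lt ((capF_le_self a e N).trans_lt hN))
  rw [rgsRun, rgsRun_eq_pending ha hcap hN.le le_rfl, Option.bind_some,
    rgsStep_pending_eq_none ha hcap hN hviol]

end RestrictedGrowth

open RestrictedGrowth in
theorem statement3 (n : ℕ) (a e : ℕ → ℝ)
    (ha : ∀ i j, i ≤ j → j < n → a i ≤ a j) :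
    IsRGCap n a e ↔ IsRGGen n a e := by
  have hmono : MonotoneOn a (Set.Iio n) := fun i _ j hj hij => ha i j hij hj
  constructor
  · intro hcap
    exact rgsRun_isSome_of_forall_lt (rgsRun_eq_pending hmono hcap le_rfl le_rfl)
      (capF_le_self a e n) (lt_of_mem_pending_capF hmono hcap)
  · intro hgen
    suffices ∀ N ≤ n, IsRGCap N a e from this n le_rfl
    intro N
    induction N with
    | zero => exact fun _ i hi => absurd hi (Nat.not_lt_zero i)
    | succ N ih =>
      intro hN
      have hcap := ih (by omega)
      refine isRGCap_succ hcap (not_lt.1 fun hviol => ?_)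
      rw [IsRGGen, rgsRun_eq_none_of_cap_lt hmono hcap hN hviol] at hgen
      simp at hgen
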